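/- For the complete graph K_n (n ≥ 2), N_2(K_n) = n − 1: there is a (0,1,*)-addressing of K_n of length n−1, and no shorter addressing exists. -/

import Mathlib

/-!
Coordinate `j` of an addressing splits off the vertices reading `1` (indicator vector `aⱼ`)
and those reading `0` (indicator `bⱼ`), and contributes to `d(u, v)` exactly when `u` and `v`
lie on opposite sides; so the distance matrix is the sum of the `N` terms `aⱼ bⱼᵀ + bⱼ aⱼᵀ`.
If `N < n - 1`, some `x ≠ 0` is orthogonal to `𝟙` and to every `aⱼ`; it kills the quadratic
form of this sum, whereas for `K_n` the quadratic form `xᵀ (J - I) x = (∑ xᵤ)² - ∑ xᵤ²` is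
negative. Conversely, the staircase addressing (vertex `i` reads `*` before coordinate `i - 1`,
`1` at it and `0` after it) makes any two vertices disagree only at the coordinate of the
larger one.
-/

def isAddressing {V : Type*} (G : SimpleGraph V) (N : ℕ)
    (f : V → Fin N → Option Bool) : Prop :=
  ∀ u v : V, G.dist u v =
    (Finset.univ.filter fun j : Fin N =>
      ∃ a b : Bool, f u j = some a ∧ f v j = some b ∧ a ≠ b).card

open Finset

variable {V ι : Type*} [Fintype ι]

def disagreements (f : V → ι → Option Bool) (u v : V) : Finset ι :=
  univ.filter fun j => ∃ a b : Bool, f u j = some a ∧ f v j = some b ∧ a ≠ b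

lemma isAddressing_iff {G : SimpleGraph V} {N : ℕ} {f : V → Fin N → Option Bool} :
    isAddressing G N f ↔ ∀ u v, G.dist u v = #(disagreements f u v) :=
  Iff.rfl

lemma disagreements_self (f : V → ι → Option Bool) (u : V) : disagreements f u u = ∅ :=
  filter_eq_empty_iff.2 fun _ _ ⟨_, _, ha, hb, hab⟩ =>
    hab (Option.some_inj.1 (ha.symm.trans hb))

lemma isAddressing_top_iff {N : ℕ} {f : V → Fin N → Option Bool} :
    isAddressing ⊤ N f ↔ ∀ u v, u ≠ v → #(disagreements f u v) = 1 := by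
  refine isAddressing_iff.trans ⟨fun h u v huv => ?_, fun h u v => ?_⟩
  · rw [← h, SimpleGraph.dist_top_of_ne huv]
  · obtain rfl | huv := eq_or_ne u v
    · simp [disagreements_self]
    · rw [h u v huv, SimpleGraph.dist_top_of_ne huv]

section QuadraticForm

variable [Fintype V] {R : Type*} [CommRing R]

lemma ite_disagree_eq (p q : Option Bool) (r s : R) :
    (if ∃ a b : Bool, p = some a ∧ q = some b ∧ a ≠ b then r * s else 0) =
      (if p = some true then r else 0) * (if q = some false then s else 0) +
        (if p = some false then r else 0) * (if q = some true then s else 0) := by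
  rcases p with _ | _ | _ <;> rcases q with _ | _ | _ <;> simp

lemma sum_sum_mul_card_disagreements (f : V → ι → Option Bool) (x : V → R) :
    ∑ u, ∑ v, x u * x v * #(disagreements f u v) =
      2 * ∑ j, (∑ u with f u j = some true, x u) * ∑ u with f u j = some false, x u := by
  have hpair : ∀ u v, x u * x v * #(disagreements f u v) =
      ∑ j, ((if f u j = some true then x u else 0) * (if f v j = some false then x v else 0) +
        (if f u j = some false then x u else 0) * (if f v j = some true then x v else 0)) := by
    intro u v
    simp only [disagreements, card_filter, Nat.cast_sum, mul_sum, ← ite_disagree_eq]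
    refine sum_congr rfl fun j _ => ?_
    split_ifs <;> simp
  simp_rw [hpair]
  rw [sum_congr rfl fun u _ => sum_comm, sum_comm, mul_sum]
  refine sum_congr rfl fun j _ => ?_
  simp_rw [sum_add_distrib, ← sum_mul_sum, sum_filter]
  ring

lemma sum_sum_mul_dist_top [DecidableEq V] (x : V → R) :
    ∑ u, ∑ v, x u * x v * (⊤ : SimpleGraph V).dist u v = (∑ u, x u) ^ 2 - ∑ u, x u ^ 2 := by
  have hpair : ∀ u v, x u * x v * (⊤ : SimpleGraph V).dist u v =
      x u * x v - if u = v then x u * x v else 0 := by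
    intro u v
    rw [SimpleGraph.dist_top]
    split_ifs with h <;> simp
  simp_rw [hpair, sum_sub_distrib, sum_ite_eq, mem_univ, if_true, sq, sum_mul_sum]

end QuadraticForm

lemma exists_ne_zero_forall_dotProduct_eq_zero {K m n : Type*} [Field K] [Fintype m] [Fintype n]
    (w : m → n → K) (h : Fintype.card m < Fintype.card n) :
    ∃ x ≠ 0, ∀ i, w i ⬝ᵥ x = 0 := by
  obtain ⟨x, hx, hx0⟩ := (Submodule.ne_bot_iff _).1 <|
    LinearMap.ker_ne_bot_of_finrank_lt (f := (Matrix.of w).mulVecLin) (by simpa using h)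
  exact ⟨x, hx0, fun i => congrFun hx i⟩

theorem card_sub_one_le_of_isAddressing_top [Fintype V] {N : ℕ} {f : V → Fin N → Option Bool}
    (hf : isAddressing ⊤ N f) : Fintype.card V - 1 ≤ N := by
  classical
  by_contra! hN
  obtain ⟨x, hx0, hx⟩ := exists_ne_zero_forall_dotProduct_eq_zero (K := ℝ)
    (fun (i : Option (Fin N)) u => i.elim 1 fun j => if f u j = some true then 1 else 0)
    (by rw [Fintype.card_option, Fintype.card_fin]; omega)
  have hsum : ∑ u, x u = 0 := by simpa [dotProduct] using hx none
  have hcol : ∀ j, ∑ u with f u j = some true, x u = 0 := fun j => by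
    simpa [dotProduct, sum_filter] using hx (some j)
  have hq : ∑ u, ∑ v, x u * x v * (⊤ : SimpleGraph V).dist u v = 0 := by
    simp_rw [isAddressing_iff.1 hf, sum_sum_mul_card_disagreements, hcol, zero_mul, sum_const_zero,
      mul_zero]
  rw [sum_sum_mul_dist_top, hsum, sq, zero_mul, zero_sub, neg_eq_zero] at hq
  exact hx0 (dotProduct_self_eq_zero.1 (by simpa [dotProduct, sq] using hq))

def staircaseAddressing (n : ℕ) : Fin n → Fin (n - 1) → Option Bool := fun i j =>
  if (j : ℕ) + 1 < i then none else if (j : ℕ) + 1 = i then some true else some false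

lemma mem_disagreements_staircaseAddressing {n : ℕ} {u v : Fin n} (huv : u ≠ v)
    (j : Fin (n - 1)) :
    j ∈ disagreements (staircaseAddressing n) u v ↔ (j : ℕ) + 1 = max (u : ℕ) v := by
  have : (u : ℕ) ≠ v := Fin.val_ne_of_ne huv
  rw [disagreements, mem_filter_univ]
  simp only [staircaseAddressing]
  split_ifs <;> simp <;> omega

lemma isAddressing_staircaseAddressing (n : ℕ) :
    isAddressing ⊤ (n - 1) (staircaseAddressing n) :=
  isAddressing_top_iff.2 fun u v huv => card_eq_one.2 ⟨⟨max (u : ℕ) v - 1, by omega⟩, by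
    ext j
    simp only [mem_disagreements_staircaseAddressing huv, mem_singleton, Fin.ext_iff]
    omega⟩

theorem N2_complete_general (n : ℕ) :
    (∃ f : Fin n → Fin (n - 1) → Option Bool,
      isAddressing (⊤ : SimpleGraph (Fin n)) (n - 1) f) ∧
    (∀ (N : ℕ) (f : Fin n → Fin N → Option Bool),
      isAddressing (⊤ : SimpleGraph (Fin n)) N f → n - 1 ≤ N) :=
  ⟨⟨_, isAddressing_staircaseAddressing n⟩, fun _ _ hf => by
    simpa using card_sub_one_le_of_isAddressing_top hf⟩

/-- `N₂(K_n) = n − 1`: the complete graph has a `(0,1,*)`-addressing of length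
`n−1` and no shorter one. -/
theorem N2_complete (n : ℕ) (hn : 2 ≤ n) :
    (∃ f : Fin n → Fin (n - 1) → Option Bool,
      isAddressing (⊤ : SimpleGraph (Fin n)) (n - 1) f) ∧
    (∀ (N : ℕ) (f : Fin n → Fin N → Option Bool),
      isAddressing (⊤ : SimpleGraph (Fin n)) N f → n - 1 ≤ N) :=
  N2_complete_general n
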